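/- Let α ∈ L²(Ω, ℝ^{q_j}) and, for ℓ = 0, …, j−1, let z̃_ℓ ∈ L²(Ω, ℝ^{q_ℓ}) and γ_ℓ ∈ L²(Ω, ℝ^{q_ℓ}) be given random vectors. Define B = [B_0, …, B_{j−1}] ∈ ℝ^{q_j×q} with blocks B_k = E_{α z̃_k} ∈ ℝ^{q_j×q_k}, and A = (A_{ℓk})_{ℓ,k=0}^{j−1} ∈ ℝ^{q×q} with blocks A_{ℓk} = E_{γ_ℓ z̃_k} ∈ ℝ^{q_ℓ×q_k}, where q = q_0 + … + q_{j−1}. Suppose I − A is invertible and set [C_0, …, C_{j−1}] = B(I − A)^{−1} with C_ℓ ∈ ℝ^{q_j×q_ℓ}. Then the random vector v defined by v(ω) = α(ω) + Σ_{ℓ=0}^{j−1} C_ℓ γ_ℓ(ω) satisfies the Fredholm-type integral equation v(ω) = α(ω) + Σ_{ℓ=0}^{j−1} (∫_Ω v(ξ) z̃_ℓ(ξ)^T dμ(ξ)) γ_ℓ(ω), i.e. v(ω) = α(ω) + Σ_{ℓ=0}^{j−1} E_{v z̃_ℓ} γ_ℓ(ω) for all ω ∈ Ω. -/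

import Mathlib

open MeasureTheory Matrix Finset Filter

noncomputable section

/-- The covariance matrix `E_{xy}` of two random vectors. -/
def covM {Ω : Type} [MeasurableSpace Ω] (μ : Measure Ω) {m n : ℕ}
    (x : Ω → Fin m → ℝ) (y : Ω → Fin n → ℝ) : Matrix (Fin m) (Fin n) ℝ :=
  Matrix.of fun i j => ∫ ω, x ω i * y ω j ∂μ

/-- The squared norm `‖x‖²_Ω` of a random vector. -/
def sqnormOm {Ω : Type} [MeasurableSpace Ω] (μ : Measure Ω) {m : ℕ}
    (x : Ω → Fin m → ℝ) : ℝ :=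
  ∫ ω, ∑ j, (x ω j) ^ 2 ∂μ

/-- The Moore–Penrose conditions. -/
def IsMoorePenrose {m n : ℕ} (A : Matrix (Fin m) (Fin n) ℝ)
    (B : Matrix (Fin n) (Fin m) ℝ) : Prop :=
  A * B * A = A ∧ B * A * B = B ∧ (A * B)ᵀ = A * B ∧ (B * A)ᵀ = B * A

/-- The Moore–Penrose pseudoinverse `M^†`. -/
def mpinv {m n : ℕ} (A : Matrix (Fin m) (Fin n) ℝ) : Matrix (Fin n) (Fin m) ℝ :=
  Classical.epsilon fun B => IsMoorePenrose A B

/-- The symmetric positive semidefinite square root `M^{1/2}` of a PSD matrix. -/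
def msqrtM {n : ℕ} (M : Matrix (Fin n) (Fin n) ℝ) : Matrix (Fin n) (Fin n) ℝ :=
  Classical.epsilon fun S => S.PosSemidef ∧ S * S = M

/-- Squared Frobenius norm. -/
def frobSq {m n : ℕ} (A : Matrix (Fin m) (Fin n) ℝ) : ℝ := ∑ i, ∑ j, (A i j) ^ 2

/-- `(u, v, σ)` is a singular value decomposition of `A`:
`A = ∑ k σ_k u_k v_kᵀ` with orthonormal `u`'s and `v`'s and
nonnegative singular values in decreasing order. -/
def IsSVDOf {m n : ℕ} (A : Matrix (Fin m) (Fin n) ℝ)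
    (u : ℕ → Fin m → ℝ) (v : ℕ → Fin n → ℝ) (σ : ℕ → ℝ) : Prop :=
  (∀ k l, k < min m n → l < min m n → u k ⬝ᵥ u l = if k = l then (1 : ℝ) else 0) ∧
  (∀ k l, k < min m n → l < min m n → v k ⬝ᵥ v l = if k = l then (1 : ℝ) else 0) ∧
  (∀ k, 0 ≤ σ k) ∧ Antitone σ ∧ (∀ k, min m n ≤ k → σ k = 0) ∧
  A = ∑ k ∈ Finset.range (min m n), σ k • vecMulVec (u k) (v k)

/- The covariance `E_{v z̃_ℓ}` is linear in `v`, so substituting `v = α + Σ_k C_k γ_k` gives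
`E_{v z̃_ℓ} = B_ℓ + Σ_k C_k A_{kℓ}`, the `ℓ`-th block column of `B + C A`. Multiplying
`C (I − A) = B` out shows `C = B + C A`, so `E_{v z̃_ℓ} = C_ℓ` and the equation defining `v`
is the Fredholm equation. -/

namespace Matrix

variable {l o ι R : Type*} [Fintype ι] {β : ι → Type*} [∀ k, Fintype (β k)]

theorem submatrix_mul_eq_sum_sigmaMk [NonUnitalNonAssocSemiring R] (M : Matrix l (Σ k, β k) R)
    (N : Matrix (Σ k, β k) o R) {p : Type*} (g : p → o) :
    (M * N).submatrix id g = ∑ k, M.submatrix id (Sigma.mk k) * N.submatrix (Sigma.mk k) g := by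
  ext i j
  simp only [submatrix_apply, id, mul_apply, sum_apply, Fintype.sum_sigma]

theorem mul_inv_one_sub_eq [Fintype o] [DecidableEq o] [CommRing R] {A : Matrix o o R}
    (hA : IsUnit (1 - A).det) (B : Matrix l o R) : B * (1 - A)⁻¹ = B + B * (1 - A)⁻¹ * A := by
  have hB : B * (1 - A)⁻¹ * (1 - A) = B := by
    rw [Matrix.mul_assoc, nonsing_inv_mul _ hA, Matrix.mul_one]
  rw [Matrix.mul_sub, Matrix.mul_one] at hB
  exact eq_add_of_sub_eq hB

end Matrix

section Covariance

variable {Ω : Type} [MeasurableSpace Ω] {μ : Measure Ω} {m p q : ℕ}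
  {x x' : Ω → Fin m → ℝ} {y : Ω → Fin p → ℝ}

theorem integrable_mul_apply_of_memLp (hx : MemLp x 2 μ) (hy : MemLp y 2 μ) (i : Fin m)
    (j : Fin p) : Integrable (fun ω => x ω i * y ω j) μ :=
  (hx.eval i).integrable_mul (hy.eval j)

theorem MeasureTheory.MemLp.mulVec (M : Matrix (Fin q) (Fin m) ℝ) (hx : MemLp x 2 μ) :
    MemLp (fun ω => M *ᵥ x ω) 2 μ :=
  (LinearMap.toContinuousLinearMap (Matrix.mulVecLin M)).comp_memLp' hx

theorem covM_add_left (hx : MemLp x 2 μ) (hx' : MemLp x' 2 μ) (hy : MemLp y 2 μ) :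
    covM μ (fun ω => x ω + x' ω) y = covM μ x y + covM μ x' y := by
  ext i j
  simp only [covM, of_apply, Matrix.add_apply, Pi.add_apply, add_mul]
  exact integral_add (integrable_mul_apply_of_memLp hx hy i j)
    (integrable_mul_apply_of_memLp hx' hy i j)

theorem covM_sum_left {ι : Type*} (s : Finset ι) {x : ι → Ω → Fin m → ℝ}
    (hx : ∀ k ∈ s, MemLp (x k) 2 μ) (hy : MemLp y 2 μ) :
    covM μ (fun ω => ∑ k ∈ s, x k ω) y = ∑ k ∈ s, covM μ (x k) y := by
  ext i j
  simp only [covM, of_apply, Matrix.sum_apply, Finset.sum_apply, Finset.sum_mul]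
  exact integral_finsetSum s fun k hk => integrable_mul_apply_of_memLp (hx k hk) hy i j

theorem covM_mulVec_left (M : Matrix (Fin q) (Fin m) ℝ) (hx : MemLp x 2 μ) (hy : MemLp y 2 μ) :
    covM μ (fun ω => M *ᵥ x ω) y = M * covM μ x y := by
  ext i j
  simp only [covM, of_apply, mul_apply, mulVec, dotProduct, Finset.sum_mul, mul_assoc]
  rw [integral_finsetSum _ fun k _ => (integrable_mul_apply_of_memLp hx hy k j).const_mul _]
  simp only [integral_const_mul]

theorem covM_add_sum_mulVec_left {n : ℕ} {qv : Fin n → ℕ} {α : Ω → Fin m → ℝ}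
    {γ : ∀ k, Ω → Fin (qv k) → ℝ} (C : ∀ k, Matrix (Fin m) (Fin (qv k)) ℝ) (hα : MemLp α 2 μ)
    (hγ : ∀ k, MemLp (γ k) 2 μ) (hy : MemLp y 2 μ) :
    covM μ (fun ω => α ω + ∑ k, C k *ᵥ γ k ω) y
      = covM μ α y + ∑ k, C k * covM μ (γ k) y := by
  have hCγ : ∀ k, MemLp (fun ω => C k *ᵥ γ k ω) 2 μ := fun k => (hγ k).mulVec (C k)
  rw [covM_add_left hα (memLp_finsetSum _ fun k _ => hCγ k) hy,
    covM_sum_left _ (fun k _ => hCγ k) hy]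
  simp only [covM_mulVec_left _ (hγ _) hy]

end Covariance

theorem stmt16_general {Ω : Type} [MeasurableSpace Ω] (μ : Measure Ω)
    {n qj : ℕ} (qv : Fin n → ℕ)
    (α : Ω → Fin qj → ℝ) (ztil γ : ∀ ℓ, Ω → Fin (qv ℓ) → ℝ)
    (hα : MemLp α 2 μ) (hztil : ∀ ℓ, MemLp (ztil ℓ) 2 μ) (hγ : ∀ ℓ, MemLp (γ ℓ) 2 μ)
    (Abig : Matrix ((ℓ : Fin n) × Fin (qv ℓ)) ((ℓ : Fin n) × Fin (qv ℓ)) ℝ)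
    (hAbig : ∀ (ℓ k : Fin n) (a : Fin (qv ℓ)) (b : Fin (qv k)),
      Abig ⟨ℓ, a⟩ ⟨k, b⟩ = covM μ (γ ℓ) (ztil k) a b)
    (Bbig : Matrix (Fin qj) ((ℓ : Fin n) × Fin (qv ℓ)) ℝ)
    (hBbig : ∀ (k : Fin n) (i : Fin qj) (b : Fin (qv k)),
      Bbig i ⟨k, b⟩ = covM μ α (ztil k) i b)
    (hinv : IsUnit (1 - Abig).det)
    (C : ∀ ℓ, Matrix (Fin qj) (Fin (qv ℓ)) ℝ)
    (hC : ∀ (ℓ : Fin n) (i : Fin qj) (a : Fin (qv ℓ)),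
      C ℓ i a = (Bbig * (1 - Abig)⁻¹) i ⟨ℓ, a⟩)
    (v : Ω → Fin qj → ℝ)
    (hv : ∀ ω, v ω = α ω + ∑ ℓ, C ℓ *ᵥ γ ℓ ω) :
    ∀ ω, v ω = α ω + ∑ ℓ, covM μ v (ztil ℓ) *ᵥ γ ℓ ω := by
  set X := Bbig * (1 - Abig)⁻¹
  have hCX : ∀ ℓ, C ℓ = X.submatrix id (Sigma.mk ℓ) := fun ℓ => Matrix.ext (hC ℓ)
  have hcov : ∀ ℓ, covM μ v (ztil ℓ) = C ℓ := fun ℓ => calc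
    covM μ v (ztil ℓ) = covM μ α (ztil ℓ) + ∑ k, C k * covM μ (γ k) (ztil ℓ) := by
      rw [funext hv, covM_add_sum_mulVec_left C hα hγ (hztil ℓ)]
    _ = Bbig.submatrix id (Sigma.mk ℓ) + (X * Abig).submatrix id (Sigma.mk ℓ) := by
      rw [submatrix_mul_eq_sum_sigmaMk]
      congr 1
      · exact Matrix.ext fun i b => (hBbig ℓ i b).symm
      · refine sum_congr rfl fun k _ => ?_
        rw [hCX]
        exact congrArg _ (Matrix.ext fun a b => (hAbig k ℓ a b).symm)
    _ = (Bbig + X * Abig).submatrix id (Sigma.mk ℓ) := rfl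
    _ = C ℓ := by rw [← mul_inv_one_sub_eq hinv, hCX]
  intro ω
  simp only [hcov]
  exact hv ω

/-- if `I − A` is invertible (the block matrix with blocks
`A_{ℓk} = E_{γ_ℓ z̃_k}`), and `[C_0, …, C_{j−1}] = B (I − A)⁻¹` where `B` has
blocks `B_k = E_{α z̃_k}`, then `v(ω) = α(ω) + Σ_ℓ C_ℓ γ_ℓ(ω)` solves the
Fredholm-type equation `v(ω) = α(ω) + Σ_ℓ E_{v z̃_ℓ} γ_ℓ(ω)`. -/
theorem stmt16 {Ω : Type} [MeasurableSpace Ω] (μ : Measure Ω) [IsProbabilityMeasure μ]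
    {n qj : ℕ} (qv : Fin n → ℕ)
    (α : Ω → Fin qj → ℝ) (ztil γ : ∀ ℓ, Ω → Fin (qv ℓ) → ℝ)
    (hα : MemLp α 2 μ) (hztil : ∀ ℓ, MemLp (ztil ℓ) 2 μ) (hγ : ∀ ℓ, MemLp (γ ℓ) 2 μ)
    (Abig : Matrix ((ℓ : Fin n) × Fin (qv ℓ)) ((ℓ : Fin n) × Fin (qv ℓ)) ℝ)
    (hAbig : ∀ (ℓ k : Fin n) (a : Fin (qv ℓ)) (b : Fin (qv k)),
      Abig ⟨ℓ, a⟩ ⟨k, b⟩ = covM μ (γ ℓ) (ztil k) a b)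
    (Bbig : Matrix (Fin qj) ((ℓ : Fin n) × Fin (qv ℓ)) ℝ)
    (hBbig : ∀ (k : Fin n) (i : Fin qj) (b : Fin (qv k)),
      Bbig i ⟨k, b⟩ = covM μ α (ztil k) i b)
    (hinv : IsUnit (1 - Abig).det)
    (C : ∀ ℓ, Matrix (Fin qj) (Fin (qv ℓ)) ℝ)
    (hC : ∀ (ℓ : Fin n) (i : Fin qj) (a : Fin (qv ℓ)),
      C ℓ i a = (Bbig * (1 - Abig)⁻¹) i ⟨ℓ, a⟩)
    (v : Ω → Fin qj → ℝ)
    (hv : ∀ ω, v ω = α ω + ∑ ℓ, C ℓ *ᵥ γ ℓ ω) :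
    ∀ ω, v ω = α ω + ∑ ℓ, covM μ v (ztil ℓ) *ᵥ γ ℓ ω :=
  stmt16_general μ qv α ztil γ hα hztil hγ Abig hAbig Bbig hBbig hinv C hC v hv
end
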